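/- Let K, D, λ be positive integers with D < K such that λ divides K − D and K − D + λ divides K; set p = K/(K−D+λ) and m = (K−D)/λ. Consider the index coding problem over GF(2) where receiver R_k demands x_k and has side information {x_{k+λ}, x_{k+λ+(K−D)}, x_{k+2λ+(K−D)}, x_{k+2λ+2(K−D)}, ..., x_{k+(p−1)λ+(p−1)(K−D)}, x_{k+pλ+(p−1)(K−D)}} (indices mod K in {1,...,K}). Then the code consisting of the K − D symbols C_i = x_i + x_{i+λ} + x_{i+λ+(K−D)} + x_{i+2λ+(K−D)} + x_{i+2λ+2(K−D)} + ... + x_{i+(p−1)λ+(p−1)(K−D)} + x_{i+pλ+(p−1)(K−D)}, for i = 1,...,K−D, allows every receiver to decode its demanded message; in particular, any receiver whose interfering symbol x_{k−λ} appears in its symbol C_i can decode after adding the m symbols C_{i−sλ} for s = 0,...,m−1. -/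
import Mathlib


/-- Standard basis vector over GF(2) for message index `k` (messages indexed by `ZMod K`,
i.e. index arithmetic is modulo `K`). -/
def e (K : ℕ) (k : ZMod K) : ZMod K → ZMod 2 := Pi.single k 1

/-- Receiver `k` can decode its demanded message `x_k`: the demand vector lies in the GF(2)-span
of the broadcast code symbols `C` together with its side-information messages `side`. -/
def Decodes (K : ℕ) (C : Set (ZMod K → ZMod 2)) (side : Set (ZMod K)) (k : ZMod K) : Prop :=
  e K k ∈ Submodule.span (ZMod 2) (C ∪ e K '' side)

/-- A 0-1 matrix over GF(2) fits the directed graph with edge relation `E`: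
unit diagonal, and zero outside the diagonal and edge set. -/
def Fits {V : Type*} (E : V → V → Prop) (A : Matrix V V (ZMod 2)) : Prop :=
  (∀ i, A i i = 1) ∧ ∀ i j, i ≠ j → ¬ E i j → A i j = 0

private def Sfun (K N p j : ℕ) : ZMod K → ZMod 2 :=
  ∑ t ∈ Finset.range p, e K ((j + t * N : ℕ) : ZMod K)

private lemma addself {K : ℕ} (v : ZMod K → ZMod 2) : v + v = 0 := by
  funext x
  have h : ∀ y : ZMod 2, y + y = 0 := by decide
  exact h (v x)

private lemma cancel {K : ℕ} (x y z : ZMod K → ZMod 2) : (x + y) + (y + z) = x + z := by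
  have h : (x + y) + (y + z) = x + ((y + y) + z) := by abel
  rw [h, addself, zero_add]

private lemma Sfun_add_N (K N p : ℕ) (hK : K = p * N) (j : ℕ) :
    Sfun K N p (j + N) = Sfun K N p j := by
  have key : Sfun K N p (j + N)
      = ∑ t ∈ Finset.range p, e K ((j + (t + 1) * N : ℕ) : ZMod K) := by
    unfold Sfun
    refine Finset.sum_congr rfl fun t _ => ?_
    have h : j + N + t * N = j + (t + 1) * N := by ring
    rw [h]
  have h1 : (∑ t ∈ Finset.range (p + 1), e K ((j + t * N : ℕ) : ZMod K))
      = (∑ t ∈ Finset.range p, e K ((j + (t + 1) * N : ℕ) : ZMod K))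
        + e K ((j + 0 * N : ℕ) : ZMod K) :=
    Finset.sum_range_succ' (fun t => e K ((j + t * N : ℕ) : ZMod K)) p
  have h2 : (∑ t ∈ Finset.range (p + 1), e K ((j + t * N : ℕ) : ZMod K))
      = Sfun K N p j + e K ((j + p * N : ℕ) : ZMod K) :=
    Finset.sum_range_succ (fun t => e K ((j + t * N : ℕ) : ZMod K)) p
  have hp0 : ((j + p * N : ℕ) : ZMod K) = ((j + 0 * N : ℕ) : ZMod K) := by
    rw [← hK]
    push_cast [ZMod.natCast_self]
    ring
  have h3 : Sfun K N p (j + N) + e K ((j + 0 * N : ℕ) : ZMod K)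
      = Sfun K N p j + e K ((j + 0 * N : ℕ) : ZMod K) := by
    rw [key, ← h1, h2, hp0]
  exact add_right_cancel h3

private lemma Sfun_add_mul (K N p : ℕ) (hK : K = p * N) (b j : ℕ) :
    Sfun K N p (j + N * b) = Sfun K N p j := by
  induction b with
  | zero => simp
  | succ b ih =>
      have h : j + N * (b + 1) = (j + N * b) + N := by ring
      rw [h, Sfun_add_N K N p hK, ih]

private lemma tele {K lam : ℕ} (S C : ℕ → ZMod K → ZMod 2)
    (hC2 : ∀ i, C i = S i + S (i + lam)) (a : ℕ) :
    ∀ t : ℕ, ∑ s ∈ Finset.range t, C (a + s * lam) = S a + S (a + t * lam) := by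
  intro t
  induction t with
  | zero =>
      have h : a + 0 * lam = a := by omega
      rw [Finset.range_zero, Finset.sum_empty, h]
      exact (addself _).symm
  | succ t ih =>
      rw [Finset.sum_range_succ, ih, hC2]
      have h : a + t * lam + lam = a + (t + 1) * lam := by ring
      rw [h]
      exact cancel _ _ _

/-- Case VIII code `C_i`, `i = 1,...,K-D`; every receiver decodes. -/
theorem stmt8 (K D lam p m : ℕ) (hlam : 0 < lam) (hD : 0 < D) (hDK : D < K)
    (hl : lam ∣ (K - D)) (hdvd : (K - D + lam) ∣ K)
    (hp : p = K / (K - D + lam)) (hm : m = (K - D) / lam)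
    (C : ℕ → ZMod K → ZMod 2)
    (hC : ∀ i : ℕ, C i =
      (∑ s ∈ Finset.range p, e K ((i + s * lam + s * (K - D) : ℕ) : ZMod K))
        + ∑ s ∈ Finset.range p, e K ((i + (s + 1) * lam + s * (K - D) : ℕ) : ZMod K)) :
    ∀ k : ℕ, 1 ≤ k → k ≤ K →
      Decodes K {v | ∃ i : ℕ, 1 ≤ i ∧ i ≤ K - D ∧ v = C i}
        {j | (∃ s : ℕ, 1 ≤ s ∧ s ≤ p ∧ j = ((k + s * lam + (s - 1) * (K - D) : ℕ) : ZMod K)) ∨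
             (∃ s : ℕ, 1 ≤ s ∧ s ≤ p - 1 ∧ j = ((k + s * lam + s * (K - D) : ℕ) : ZMod K))}
        ((k : ℕ) : ZMod K) := by
  intro k hk1 hk2
  unfold Decodes
  set d := K - D with hdDef
  set N := d + lam with hNdef
  have hKpN : K = p * N := by
    rw [hp]; exact (Nat.div_mul_cancel hdvd).symm
  have hml : m * lam = d := by rw [hm]; exact Nat.div_mul_cancel hl
  have hd1 : 1 ≤ d := by omega
  have hlamd : lam ≤ d := Nat.le_of_dvd (by omega) hl
  have hp1 : 1 ≤ p := by
    rcases Nat.eq_zero_or_pos p with h | h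
    · rw [h] at hKpN; simp at hKpN; omega
    · exact h
  have hm1 : 1 ≤ m := by
    rcases Nat.eq_zero_or_pos m with h | h
    · rw [h] at hml; simp at hml; omega
    · exact h
  obtain ⟨q, rfl⟩ : ∃ q, p = q + 1 := ⟨p - 1, by omega⟩
  obtain ⟨n, rfl⟩ : ∃ n, m = n + 1 := ⟨m - 1, by omega⟩
  have hC2 : ∀ i : ℕ, C i = Sfun K N (q + 1) i + Sfun K N (q + 1) (i + lam) := by
    intro i
    rw [hC i]
    unfold Sfun
    congr 1
    · refine Finset.sum_congr rfl fun s _ => ?_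
      have h : i + s * lam + s * d = i + s * N := by rw [hNdef]; ring
      rw [h]
    · refine Finset.sum_congr rfl fun s _ => ?_
      have h : i + (s + 1) * lam + s * d = i + lam + s * N := by rw [hNdef]; ring
      rw [h]
  set T : Set (ZMod K → ZMod 2) :=
    {v | ∃ i : ℕ, 1 ≤ i ∧ i ≤ d ∧ v = C i} ∪
      e K '' {j | (∃ s : ℕ, 1 ≤ s ∧ s ≤ q + 1 ∧ j = ((k + s * lam + (s - 1) * d : ℕ) : ZMod K)) ∨
        (∃ s : ℕ, 1 ≤ s ∧ s ≤ q + 1 - 1 ∧ j = ((k + s * lam + s * d : ℕ) : ZMod K))} with hT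
  show e K ((k : ℕ) : ZMod K) ∈ Submodule.span (ZMod 2) T
  have hCmem : ∀ i : ℕ, 1 ≤ i → i ≤ d → C i ∈ Submodule.span (ZMod 2) T :=
    fun i h1 h2 => Submodule.subset_span (Set.mem_union_left _ ⟨i, h1, h2, rfl⟩)
  have hsideA : ∀ t : ℕ, t < q + 1 →
      e K ((k + lam + t * N : ℕ) : ZMod K) ∈ Submodule.span (ZMod 2) T := by
    intro t ht
    have heq : k + lam + t * N = k + (t + 1) * lam + ((t + 1) - 1) * d := by
      rw [hNdef]; simp only [Nat.add_sub_cancel]; ring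
    rw [heq]
    exact Submodule.subset_span
      (Set.mem_union_right _ ⟨_, Or.inl ⟨t + 1, by omega, by omega, rfl⟩, rfl⟩)
  have hsideB : ∀ t : ℕ, t < q →
      e K ((k + (t + 1) * N : ℕ) : ZMod K) ∈ Submodule.span (ZMod 2) T := by
    intro t ht
    have heq : k + (t + 1) * N = k + (t + 1) * lam + (t + 1) * d := by
      rw [hNdef]; ring
    rw [heq]
    exact Submodule.subset_span
      (Set.mem_union_right _ ⟨_, Or.inr ⟨t + 1, by omega, by omega, rfl⟩, rfl⟩)
  have Hside1 : Sfun K N (q + 1) (k + lam) ∈ Submodule.span (ZMod 2) T := by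
    unfold Sfun
    exact Submodule.sum_mem _ fun t ht => hsideA t (Finset.mem_range.mp ht)
  have Hside2 : Sfun K N (q + 1) k + e K ((k : ℕ) : ZMod K) ∈ Submodule.span (ZMod 2) T := by
    have hsplit : (∑ t ∈ Finset.range (q + 1), e K ((k + t * N : ℕ) : ZMod K))
        = (∑ t ∈ Finset.range q, e K ((k + (t + 1) * N : ℕ) : ZMod K))
          + e K ((k + 0 * N : ℕ) : ZMod K) :=
      Finset.sum_range_succ' (fun t => e K ((k + t * N : ℕ) : ZMod K)) q
    have h0 : k + 0 * N = k := by omega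
    rw [h0] at hsplit
    unfold Sfun
    rw [hsplit, add_assoc, addself, add_zero]
    exact Submodule.sum_mem _ fun t ht => hsideB t (Finset.mem_range.mp ht)
  have hN1 : 1 ≤ N := by omega
  obtain ⟨a, r, hkr, hr1, hrN⟩ : ∃ a r, k = r + N * a ∧ 1 ≤ r ∧ r ≤ N := by
    refine ⟨(k - 1) / N, (k - 1) % N + 1, ?_, by omega, ?_⟩
    · have h := Nat.div_add_mod (k - 1) N
      omega
    · have h := Nat.mod_lt (k - 1) (show 0 < N by omega)
      omega
  have hSk : Sfun K N (q + 1) k = Sfun K N (q + 1) r := by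
    rw [hkr]; exact Sfun_add_mul K N (q + 1) hKpN a r
  obtain ⟨X, hXmem, hXeq⟩ :
      ∃ X, X ∈ Submodule.span (ZMod 2) T ∧
        X = Sfun K N (q + 1) k + Sfun K N (q + 1) (k + lam) := by
    rcases le_or_gt r d with hcase | hcase
    · refine ⟨C r, hCmem r (by omega) hcase, ?_⟩
      have hSkl : Sfun K N (q + 1) (k + lam) = Sfun K N (q + 1) (r + lam) := by
        rw [show k + lam = (r + lam) + N * a from by omega]
        exact Sfun_add_mul K N (q + 1) hKpN a (r + lam)
      rw [hC2 r, hSk, hSkl]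
    · refine ⟨∑ s ∈ Finset.range (n + 1), C ((r - d) + s * lam),
        Submodule.sum_mem _ fun s hs => hCmem _ (by omega) ?_, ?_⟩
      · have hs' : s ≤ n := Nat.lt_succ_iff.mp (Finset.mem_range.mp hs)
        have hb : s * lam ≤ n * lam := Nat.mul_le_mul_right lam hs'
        have hc : (n + 1) * lam = n * lam + lam := by ring
        omega
      · have h1 := tele (Sfun K N (q + 1)) C hC2 (r - d) (n + 1)
        have h2 : (r - d) + (n + 1) * lam = r := by omega
        rw [h1, h2]
        have h3 : Sfun K N (q + 1) (k + lam) = Sfun K N (q + 1) (r - d) := by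
          rw [show k + lam = ((r - d) + N) + N * a from by omega]
          rw [Sfun_add_mul K N (q + 1) hKpN a ((r - d) + N)]
          exact Sfun_add_N K N (q + 1) hKpN (r - d)
        rw [← h3, ← hSk]
        exact add_comm _ _
  have hkey : e K ((k : ℕ) : ZMod K) =
      X + ((Sfun K N (q + 1) k + e K ((k : ℕ) : ZMod K)) + Sfun K N (q + 1) (k + lam)) := by
    rw [hXeq]
    funext x
    simp only [Pi.add_apply]
    have h2 : (2 : ZMod 2) = 0 := by decide
    linear_combination (-(Sfun K N (q + 1) k x) - Sfun K N (q + 1) (k + lam) x) * h2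
  rw [hkey]
  exact Submodule.add_mem _ hXmem (Submodule.add_mem _ Hside2 Hside1)
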